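/- arXiv:2107.02843 — 2 statements merged into one kernel-verified Lean document; each statement's English description precedes it below -/
import Mathlib

section
/- Let G be a group and X a locally compact Hausdorff topological space with a G-action by homeomorphisms. Let D and D' be subsets of [0,∞) × X × G; for a point y = (s,x,g) write s_y := s, x_y := x, g_y := g. Let H and H' be complex Hilbert spaces with orthogonal decompositions (H_y)_{y∈D} and (H'_{y'})_{y'∈D'}, with orthogonal projections P_y and P'_{y'}. Assume: (a) every H_y and every H'_{y'} is finite dimensional; and (b) for every n ∈ ℕ and every compact subset B of X the sets {y ∈ D : s_y ≤ n and x_y ∈ B} and {y' ∈ D' : s_{y'} ≤ n and x_{y'} ∈ B} are finite. For a bounded continuous function f : X → ℂ let Φ(f) and Φ'(f) denote the unique bounded diagonal operators with Φ(f)v = f(x_y)·v for v ∈ H_y and Φ'(f)w = f(x_{y'})·w for w ∈ H'_{y'}. Let A : H → H' be a bounded operator such that for some n ∈ ℕ one has P'_{y'} ∘ A ∘ P_y = 0 unless s_y ≤ n and s_{y'} ≤ n. Then for every continuous function f : X → ℂ vanishing at infinity, both Φ'(f) ∘ A and A ∘ Φ(f) are compact operators. -/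
/-!
Approximate by finite-rank operators. Fix `δ > 0`. Only finitely many summands meet the support of
`A` and carry a multiplier of size `≥ δ`: they have cone-parameter `≤ n` and base point in the
compact set `{δ ≤ ‖f‖}`. Compressing `A ∘ Φ` to these finitely many finite-dimensional summands
gives a finite-rank operator, and the remainder is `A` composed with diagonal multipliers of size
`≤ δ`, whose norm is at most `δ‖A‖` by Pythagoras on the dense algebraic sum. The same estimate for
`Φ' ∘ A` follows by passing to adjoints. Compact operators are norm-closed, so both are compact.
-/

open scoped NNReal

/-- An orthogonal decomposition of a complex Hilbert space indexed by `I`, presented by the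
family of orthogonal projections onto its members: a family of mutually orthogonal
self-adjoint idempotents whose ranges have dense algebraic span. -/
structure OrthogonalDecomposition {I H : Type*} [NormedAddCommGroup H]
    [InnerProductSpace ℂ H] [CompleteSpace H] (P : I → (H →L[ℂ] H)) : Prop where
  isSelfAdjoint : ∀ i, IsSelfAdjoint (P i)
  idempotent : ∀ i, (P i).comp (P i) = P i
  orthogonal : ∀ i j, i ≠ j → (P i).comp (P j) = 0
  denseSpan : Dense (((⨆ i, LinearMap.range (P i : H →ₗ[ℂ] H)) : Submodule ℂ H) : Set H)

theorem isCompactOperator_of_finiteDimensional_range {𝕜 E F : Type*} [NontriviallyNormedField 𝕜]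
    [LocallyCompactSpace 𝕜] [NormedAddCommGroup E] [NormedSpace 𝕜 E] [NormedAddCommGroup F]
    [NormedSpace 𝕜 F] (T : E →L[𝕜] F) [FiniteDimensional 𝕜 (LinearMap.range (T : E →ₗ[𝕜] F))] :
    IsCompactOperator T :=
  have := FiniteDimensional.proper 𝕜 (LinearMap.range (T : E →ₗ[𝕜] F))
  (isCompactOperator_of_locallyCompactSpace_dom
    (T.codRestrict _ fun x => LinearMap.mem_range_self _ x)).clm_comp (Submodule.subtypeL _)

theorem isCompactOperator_of_forall_exists_norm_sub_le_mul {𝕜 E F : Type*}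
    [NontriviallyNormedField 𝕜] [NormedAddCommGroup E] [NormedSpace 𝕜 E] [NormedAddCommGroup F]
    [NormedSpace 𝕜 F] [CompleteSpace F] {T : E →L[𝕜] F} (C : ℝ)
    (h : ∀ δ > 0, ∃ S : E →L[𝕜] F, IsCompactOperator S ∧ ‖T - S‖ ≤ δ * C) :
    IsCompactOperator T := by
  refine isClosed_setOfPred_isCompactOperator.closure_subset
    (Metric.mem_closure_iff.2 fun ε hε => ?_)
  obtain ⟨S, hS, hTS⟩ := h (ε / (2 * (|C| + 1))) (by positivity)
  refine ⟨S, hS, ?_⟩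
  calc dist T S = ‖T - S‖ := dist_eq_norm T S
    _ ≤ ε / (2 * (|C| + 1)) * (|C| + 1) := hTS.trans (by gcongr; linarith [le_abs_self C])
    _ = ε / 2 := by field_simp
    _ < ε := half_lt_self hε

namespace OrthogonalDecomposition

variable {I E F : Type*} [NormedAddCommGroup E] [InnerProductSpace ℂ E] [CompleteSpace E]
  [NormedAddCommGroup F] [NormedSpace ℂ F] {P : I → E →L[ℂ] E}

theorem apply_apply_self (hP : OrthogonalDecomposition P) (i : I) (x : E) :
    P i (P i x) = P i x :=
  congr($(hP.idempotent i) x)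

theorem apply_apply_of_ne (hP : OrthogonalDecomposition P) {i j : I} (hij : i ≠ j) (x : E) :
    P i (P j x) = 0 :=
  congr($(hP.orthogonal i j hij) x)

theorem comp_comp (hP : OrthogonalDecomposition P) [DecidableEq I] (i j : I) :
    P i ∘L P j = if i = j then P i else 0 := by
  split_ifs with h
  · exact h ▸ hP.idempotent i
  · exact hP.orthogonal i j h

theorem sum_comp_comp (hP : OrthogonalDecomposition P) [DecidableEq I] (s : Finset I)
    (T : E →L[ℂ] F) (i : I) : (∑ j ∈ s, T ∘L P j) ∘L P i = if i ∈ s then T ∘L P i else 0 := by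
  simp only [ContinuousLinearMap.finsetSum_comp, ContinuousLinearMap.comp_assoc, hP.comp_comp]
  simp [apply_ite (T ∘L ·)]

theorem comp_sum_comp (hP : OrthogonalDecomposition P) [DecidableEq I] (s : Finset I)
    (T : F →L[ℂ] E) (i : I) : P i ∘L (∑ j ∈ s, P j ∘L T) = if i ∈ s then P i ∘L T else 0 := by
  simp only [ContinuousLinearMap.comp_finsetSum, ← ContinuousLinearMap.comp_assoc, hP.comp_comp]
  simp [apply_ite (· ∘L T)]

theorem inner_apply_left (hP : OrthogonalDecomposition P) (i : I) (x y : E) :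
    inner ℂ (P i x) y = inner ℂ x (P i y) :=
  (hP.isSelfAdjoint i).isSymmetric x y

theorem orthogonalFamily (hP : OrthogonalDecomposition P) :
    OrthogonalFamily ℂ (fun i => LinearMap.range (P i : E →ₗ[ℂ] E))
      (fun i => (LinearMap.range (P i : E →ₗ[ℂ] E)).subtypeₗᵢ) := by
  rintro i j hij ⟨_, x, rfl⟩ ⟨_, y, rfl⟩
  change inner ℂ (P i x) (P j y) = 0
  rw [hP.inner_apply_left, hP.apply_apply_of_ne hij, inner_zero_right]

theorem ext {T S : E →L[ℂ] F} (hP : OrthogonalDecomposition P)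
    (h : ∀ i, T ∘L P i = S ∘L P i) : T = S := by
  have hle : ⨆ i, LinearMap.range (P i : E →ₗ[ℂ] E) ≤
      LinearMap.ker ((T - S : E →L[ℂ] F) : E →ₗ[ℂ] F) :=
    iSup_le fun i => LinearMap.range_le_ker_iff.2 <| by
      ext x
      simpa [sub_eq_zero] using congr($(h i) x)
  ext x
  have hx : x ∈ closure (LinearMap.ker ((T - S : E →L[ℂ] F) : E →ₗ[ℂ] F) : Set E) :=
    (hP.denseSpan.mono hle).closure_eq ▸ Set.mem_univ x
  rw [(T - S).isClosed_ker.closure_eq] at hx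
  simpa [sub_eq_zero] using hx

theorem eq_zero_of_forall_apply_eq_zero (hP : OrthogonalDecomposition P) {x : E}
    (h : ∀ i, P i x = 0) : x = 0 := by
  have : innerSL ℂ x = 0 := hP.ext fun i => by
    ext y
    simp [← hP.inner_apply_left, h]
  simpa using congr($this x)

theorem ext_left {T S : F →L[ℂ] E} (hP : OrthogonalDecomposition P)
    (h : ∀ i, P i ∘L T = P i ∘L S) : T = S := by
  ext x
  rw [← sub_eq_zero]
  exact hP.eq_zero_of_forall_apply_eq_zero fun i => by simpa [sub_eq_zero] using congr($(h i) x)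

theorem norm_sum_smul_le (hP : OrthogonalDecomposition P) {s : Finset I}
    (μ : ∀ i, LinearMap.range (P i : E →ₗ[ℂ] E)) {c : I → ℂ} {δ : ℝ} (hδ : 0 ≤ δ)
    (hc : ∀ i, ‖c i‖ ≤ δ) :
    ‖∑ i ∈ s, c i • (μ i : E)‖ ≤ δ * ‖∑ i ∈ s, (μ i : E)‖ := by
  refine le_of_pow_le_pow_left₀ two_ne_zero (by positivity) ?_
  have hμ := hP.orthogonalFamily.norm_sum μ s
  have hcμ := hP.orthogonalFamily.norm_sum (fun i => c i • μ i) s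
  simp only [Submodule.coe_subtypeₗᵢ, Submodule.subtype_apply, Submodule.coe_smul,
    norm_smul] at hμ hcμ
  rw [hcμ, mul_pow, hμ, Finset.mul_sum]
  gcongr with i
  rw [mul_pow]
  gcongr
  exact hc i

theorem opNorm_le_of_comp_eq_smul (hP : OrthogonalDecomposition P) {T B : E →L[ℂ] F}
    {c : I → ℂ} {δ : ℝ} (hδ : 0 ≤ δ) (hc : ∀ i, ‖c i‖ ≤ δ)
    (hT : ∀ i, T ∘L P i = c i • B ∘L P i) : ‖T‖ ≤ δ * ‖B‖ := by
  refine T.opNorm_le_bound (by positivity) fun x => ?_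
  have hclosed : IsClosed {x | ‖T x‖ ≤ δ * ‖B‖ * ‖x‖} := isClosed_le (by fun_prop) (by fun_prop)
  refine hclosed.closure_subset_iff.2 (fun x hx => ?_) (hP.denseSpan.closure_eq ▸ Set.mem_univ x)
  obtain ⟨s, hs⟩ := Submodule.mem_iSup_iff_exists_finset.1 hx
  obtain ⟨μ, rfl⟩ := (Submodule.mem_iSup_finset_iff_exists_sum _ _).1 hs
  have hTμ : T (∑ i ∈ s, (μ i : E)) = B (∑ i ∈ s, c i • (μ i : E)) := by
    simp only [map_sum, map_smul]
    refine Finset.sum_congr rfl fun i _ => ?_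
    obtain ⟨v, hv⟩ := (μ i).2
    rw [← hv]
    exact congr($(hT i) v)
  calc ‖T (∑ i ∈ s, (μ i : E))‖ ≤ ‖B‖ * ‖∑ i ∈ s, c i • (μ i : E)‖ := hTμ ▸ B.le_opNorm _
    _ ≤ ‖B‖ * (δ * ‖∑ i ∈ s, (μ i : E)‖) := by gcongr; exact hP.norm_sum_smul_le μ hδ hc
    _ = δ * ‖B‖ * ‖∑ i ∈ s, (μ i : E)‖ := by ring

theorem opNorm_le_of_proj_comp_eq_smul {G : Type*} [NormedAddCommGroup G]
    [InnerProductSpace ℂ G] [CompleteSpace G] (hP : OrthogonalDecomposition P)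
    {T B : G →L[ℂ] E} {c : I → ℂ} {δ : ℝ} (hδ : 0 ≤ δ) (hc : ∀ i, ‖c i‖ ≤ δ)
    (hT : ∀ i, P i ∘L T = c i • P i ∘L B) : ‖T‖ ≤ δ * ‖B‖ := by
  rw [← ContinuousLinearMap.adjoint.norm_map T, ← ContinuousLinearMap.adjoint.norm_map B]
  refine hP.opNorm_le_of_comp_eq_smul (c := fun i => starRingEnd ℂ (c i)) hδ (by simpa using hc)
    fun i => ?_
  have hPi : ContinuousLinearMap.adjoint (P i) = P i := (hP.isSelfAdjoint i).adjoint_eq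
  simpa only [ContinuousLinearMap.adjoint_comp, hPi, map_smulₛₗ]
    using congr(ContinuousLinearMap.adjoint $(hT i))

end OrthogonalDecomposition

def IsDiagonalOperator {I E : Type*} [NormedAddCommGroup E] [InnerProductSpace ℂ E]
    (P : I → E →L[ℂ] E) (Φ : E →L[ℂ] E) (c : I → ℂ) : Prop :=
  ∀ i, Φ ∘L P i = c i • P i

namespace IsDiagonalOperator

variable {I E F : Type*} [NormedAddCommGroup E] [InnerProductSpace ℂ E] [CompleteSpace E]
  {P : I → E →L[ℂ] E} {Φ : E →L[ℂ] E} {c : I → ℂ}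

theorem proj_comp (hΦ : IsDiagonalOperator P Φ c) (hP : OrthogonalDecomposition P) (i : I) :
    P i ∘L Φ = c i • P i := by
  refine hP.ext fun j => ?_
  rw [ContinuousLinearMap.comp_assoc, hΦ j, ContinuousLinearMap.comp_smul,
    ContinuousLinearMap.smul_comp]
  by_cases hij : i = j
  · rw [hij]
  · rw [hP.orthogonal i j hij, smul_zero, smul_zero]

/- In both proofs below the remainder has, on the `i`-th summand, the multiplier `c i`
truncated to `0` where `δ ≤ ‖c i‖`: such summands were either compressed away or are killed
by `A`. -/

theorem isCompactOperator_clm_comp [NormedAddCommGroup F] [NormedSpace ℂ F] [CompleteSpace F]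
    (hΦ : IsDiagonalOperator P Φ c) (hP : OrthogonalDecomposition P)
    (hfin : ∀ i, FiniteDimensional ℂ (LinearMap.range (P i : E →ₗ[ℂ] E))) (A : E →L[ℂ] F)
    (hA : ∀ δ > 0, {i | A ∘L P i ≠ 0 ∧ δ ≤ ‖c i‖}.Finite) :
    IsCompactOperator (A ∘L Φ) := by
  classical
  refine isCompactOperator_of_forall_exists_norm_sub_le_mul ‖A‖ fun δ hδ => ?_
  set s := (hA δ hδ).toFinset
  refine ⟨∑ i ∈ s, (A ∘L Φ) ∘L P i, Submodule.sum_mem (compactOperator _ E F) fun i _ => ?_, ?_⟩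
  · have := hfin i
    exact (isCompactOperator_of_finiteDimensional_range (P i)).clm_comp (A ∘L Φ)
  refine hP.opNorm_le_of_comp_eq_smul (c := fun i => if δ ≤ ‖c i‖ then 0 else c i)
    hδ.le (fun i => ?_) fun i => ?_
  · split_ifs with hi
    · simpa using hδ.le
    · exact (not_le.1 hi).le
  · rw [ContinuousLinearMap.sub_comp, hP.sum_comp_comp, ContinuousLinearMap.comp_assoc, hΦ i,
      ContinuousLinearMap.comp_smul]
    split_ifs <;> simp_all [s]

theorem isCompactOperator_comp_clm [NormedAddCommGroup F] [InnerProductSpace ℂ F]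
    [CompleteSpace F] (hΦ : IsDiagonalOperator P Φ c) (hP : OrthogonalDecomposition P)
    (hfin : ∀ i, FiniteDimensional ℂ (LinearMap.range (P i : E →ₗ[ℂ] E))) (A : F →L[ℂ] E)
    (hA : ∀ δ > 0, {i | P i ∘L A ≠ 0 ∧ δ ≤ ‖c i‖}.Finite) :
    IsCompactOperator (Φ ∘L A) := by
  classical
  refine isCompactOperator_of_forall_exists_norm_sub_le_mul ‖A‖ fun δ hδ => ?_
  set s := (hA δ hδ).toFinset
  refine ⟨Φ ∘L ∑ i ∈ s, P i ∘L A, ?_, ?_⟩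
  · refine (Submodule.sum_mem (compactOperator _ F E) fun i _ => ?_).clm_comp Φ
    have := hfin i
    exact (isCompactOperator_of_finiteDimensional_range (P i)).comp_clm A
  refine hP.opNorm_le_of_proj_comp_eq_smul (c := fun i => if δ ≤ ‖c i‖ then 0 else c i)
    hδ.le (fun i => ?_) fun i => ?_
  · split_ifs with hi
    · simpa using hδ.le
    · exact (not_le.1 hi).le
  · rw [← ContinuousLinearMap.comp_sub, ← ContinuousLinearMap.comp_assoc, hΦ.proj_comp hP,
      ContinuousLinearMap.smul_comp, ContinuousLinearMap.comp_sub, hP.comp_sum_comp]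
    split_ifs <;> simp_all [s]

end IsDiagonalOperator

theorem locally_compact_near_the_base_general
    {G : Type*}
    {X : Type*} [TopologicalSpace X]
    {H H' : Type*}
    [NormedAddCommGroup H] [InnerProductSpace ℂ H] [CompleteSpace H]
    [NormedAddCommGroup H'] [InnerProductSpace ℂ H'] [CompleteSpace H']
    (D D' : Set (ℝ≥0 × X × G))
    (P : D → (H →L[ℂ] H)) (P' : D' → (H' →L[ℂ] H'))
    (hP : OrthogonalDecomposition P) (hP' : OrthogonalDecomposition P')
    -- (a) the members of the decompositions are finite-dimensional
    (hfin : ∀ y : D, FiniteDimensional ℂ (LinearMap.range (P y : H →ₗ[ℂ] H)))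
    (hfin' : ∀ y' : D', FiniteDimensional ℂ (LinearMap.range (P' y' : H' →ₗ[ℂ] H')))
    -- (b) local finiteness of the index sets
    (hD : ∀ (n : ℕ) (B : Set X), IsCompact B →
      {y : D | (y.1.1 : ℝ) ≤ n ∧ y.1.2.1 ∈ B}.Finite)
    (hD' : ∀ (n : ℕ) (B : Set X), IsCompact B →
      {y' : D' | (y'.1.1 : ℝ) ≤ n ∧ y'.1.2.1 ∈ B}.Finite)
    (A : H →L[ℂ] H')
    -- `A` is supported at cone-parameters `≤ n`
    (hA : ∃ n : ℕ, ∀ (y : D) (y' : D'),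
      ¬((y.1.1 : ℝ) ≤ n ∧ (y'.1.1 : ℝ) ≤ n) → (P' y').comp (A.comp (P y)) = 0)
    -- `f` is continuous and vanishes at infinity
    (f : X → ℂ)
    (hf0 : ∀ ε : ℝ, 0 < ε → IsCompact {x : X | ε ≤ ‖f x‖})
    -- the diagonal multiplication operators associated with `f`
    (Φ : H →L[ℂ] H) (Φ' : H' →L[ℂ] H')
    (hΦ : ∀ (y : D) (v : H), P y v = v → Φ v = f y.1.2.1 • v)
    (hΦ' : ∀ (y' : D') (w : H'), P' y' w = w → Φ' w = f y'.1.2.1 • w) :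
    IsCompactOperator ⇑(Φ'.comp A) ∧ IsCompactOperator ⇑(A.comp Φ) := by
  obtain ⟨n, hn⟩ := hA
  have hdiag : IsDiagonalOperator P Φ fun y => f y.1.2.1 := fun y => by
    ext v
    exact hΦ y _ (hP.apply_apply_self y v)
  have hdiag' : IsDiagonalOperator P' Φ' fun y' => f y'.1.2.1 := fun y' => by
    ext w
    exact hΦ' y' _ (hP'.apply_apply_self y' w)
  refine ⟨hdiag'.isCompactOperator_comp_clm hP' hfin' A fun δ hδ => ?_,
    hdiag.isCompactOperator_clm_comp hP hfin A fun δ hδ => ?_⟩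
  · refine (hD' n _ (hf0 δ hδ)).subset fun y' ⟨hAy', hfy'⟩ => ⟨?_, hfy'⟩
    by_contra hy'
    exact hAy' (hP.ext fun y => by
      simpa [ContinuousLinearMap.comp_assoc] using hn y y' fun h => hy' h.2)
  · refine (hD n _ (hf0 δ hδ)).subset fun y ⟨hAy, hfy⟩ => ⟨?_, hfy⟩
    by_contra hy
    exact hAy (hP'.ext_left fun y' => by simpa using hn y y' fun h => hy h.1)

/-- **Local compactness of operators supported near the base of the cone** (Lemma 6.4 of
Bunke–Engel–Land, specialized to trivial coefficients): if `A` is supported at cone-parameters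
`≤ n`, then for every `f : X → ℂ` vanishing at infinity both `Φ'(f) ∘ A` and `A ∘ Φ(f)` are
compact operators. -/
theorem locally_compact_near_the_base
    {G : Type*} [Group G]
    {X : Type*} [TopologicalSpace X] [LocallyCompactSpace X] [T2Space X]
    [MulAction G X] (hcont : ∀ g : G, Continuous fun x : X => g • x)
    {H H' : Type*}
    [NormedAddCommGroup H] [InnerProductSpace ℂ H] [CompleteSpace H]
    [NormedAddCommGroup H'] [InnerProductSpace ℂ H'] [CompleteSpace H']
    (D D' : Set (ℝ≥0 × X × G))
    (P : D → (H →L[ℂ] H)) (P' : D' → (H' →L[ℂ] H'))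
    (hP : OrthogonalDecomposition P) (hP' : OrthogonalDecomposition P')
    -- (a) the members of the decompositions are finite-dimensional
    (hfin : ∀ y : D, FiniteDimensional ℂ (LinearMap.range (P y : H →ₗ[ℂ] H)))
    (hfin' : ∀ y' : D', FiniteDimensional ℂ (LinearMap.range (P' y' : H' →ₗ[ℂ] H')))
    -- (b) local finiteness of the index sets
    (hD : ∀ (n : ℕ) (B : Set X), IsCompact B →
      {y : D | (y.1.1 : ℝ) ≤ n ∧ y.1.2.1 ∈ B}.Finite)
    (hD' : ∀ (n : ℕ) (B : Set X), IsCompact B →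
      {y' : D' | (y'.1.1 : ℝ) ≤ n ∧ y'.1.2.1 ∈ B}.Finite)
    (A : H →L[ℂ] H')
    -- `A` is supported at cone-parameters `≤ n`
    (hA : ∃ n : ℕ, ∀ (y : D) (y' : D'),
      ¬((y.1.1 : ℝ) ≤ n ∧ (y'.1.1 : ℝ) ≤ n) → (P' y').comp (A.comp (P y)) = 0)
    -- `f` is continuous and vanishes at infinity
    (f : X → ℂ) (hf : Continuous f)
    (hf0 : ∀ ε : ℝ, 0 < ε → IsCompact {x : X | ε ≤ ‖f x‖})
    -- the diagonal multiplication operators associated with `f`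
    (Φ : H →L[ℂ] H) (Φ' : H' →L[ℂ] H')
    (hΦ : ∀ (y : D) (v : H), P y v = v → Φ v = f y.1.2.1 • v)
    (hΦ' : ∀ (y' : D') (w : H'), P' y' w = w → Φ' w = f y'.1.2.1 • w) :
    IsCompactOperator ⇑(Φ'.comp A) ∧ IsCompactOperator ⇑(A.comp Φ) :=
  locally_compact_near_the_base_general D D' P P' hP hP' hfin hfin' hD hD' A hA f hf0 Φ Φ' hΦ hΦ'
end

section
/- Let X and Y be uniform spaces with actions of a group G whose uniformities both have invariant entourage bases, and assume that the orbit space X/G, with the quotient topology coming from the uniform topology of X, is compact. Then every continuous G-equivariant map f : X → Y is uniformly continuous. -/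
/-!
The preimage of an invariant entourage of `Y` under `f × f` is a `G`-invariant neighbourhood of
the diagonal of `X`, and such a set is always an entourage. Indeed, around each point `x` there is
an invariant entourage `W x` such that `W x`-close pairs near `x` lie in the set; by compactness of
`X/G`, finitely many balls `ball x (W x)` cover `X` up to translation, and the intersection of the
corresponding `W x` is the required entourage, since the set is invariant.
-/

open Set Filter UniformSpace

section InvariantEntourages

variable {G X : Type*} [UniformSpace X]

theorem uniformContinuousConstSMul_of_invariant_basis [SMul G X]
    (hbasis : ∀ V ∈ uniformity X, ∃ W ∈ uniformity X, W ⊆ V ∧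
      ∀ (g : G) (x y : X), (x, y) ∈ W → (g • x, g • y) ∈ W) :
    UniformContinuousConstSMul G X := by
  refine ⟨fun g V hV => ?_⟩
  obtain ⟨W, hW, hWV, hWinv⟩ := hbasis V hV
  exact mem_map.2 (mem_of_superset hW fun p hp => hWV (hWinv g p.1 p.2 hp))

theorem exists_invariant_mem_uniformity_forall_mem_of_mem_nhds [SMul G X]
    (hbasis : ∀ V ∈ uniformity X, ∃ W ∈ uniformity X, W ⊆ V ∧
      ∀ (g : G) (x y : X), (x, y) ∈ W → (g • x, g • y) ∈ W)
    {U : Set (X × X)} {x : X} (hU : U ∈ nhds (x, x)) :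
    ∃ W ∈ uniformity X, (∀ (g : G) (a b : X), (a, b) ∈ W → (g • a, g • b) ∈ W) ∧
      ∀ a b, (x, a) ∈ W → (a, b) ∈ W → (a, b) ∈ U := by
  obtain ⟨T, ⟨hT, -⟩, hTU⟩ := (hasBasis_nhds_prod x x).mem_iff.1 hU
  obtain ⟨S, hS, hST⟩ := comp_mem_uniformity_sets hT
  obtain ⟨W, hW, hWS, hWinv⟩ := hbasis S hS
  refine ⟨W, hW, hWinv, fun a b hxa hab => hTU ⟨?_, ?_⟩⟩
  · exact hST ⟨a, hWS hxa, refl_mem_uniformity hS⟩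
  · exact hST ⟨a, hWS hxa, hWS hab⟩

theorem exists_finset_forall_exists_smul_mem_of_compactSpace_quotient [Group G] [MulAction G X]
    [ContinuousConstSMul G X] [CompactSpace (Quotient (MulAction.orbitRel G X))]
    (V : X → Set (X × X)) (hV : ∀ x, V x ∈ uniformity X) :
    ∃ t : Finset X, ∀ a : X, ∃ x ∈ t, ∃ g : G, (x, g • a) ∈ V x := by
  let O : X → Set (Quotient (MulAction.orbitRel G X)) := fun x =>
    Quotient.mk _ '' interior (ball x (V x))
  have hO : ∀ x, IsOpen (O x) := fun x =>
    MulAction.isOpenQuotientMap_quotientMk.isOpenMap _ isOpen_interior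
  have hcover : univ ⊆ ⋃ x, O x := by
    rintro ⟨a⟩ -
    exact mem_iUnion.2 ⟨a, a, mem_interior_iff_mem_nhds.2 (ball_mem_nhds a (hV a)), rfl⟩
  obtain ⟨t, ht⟩ := isCompact_univ.elim_finite_subcover O hO hcover
  refine ⟨t, fun a => ?_⟩
  obtain ⟨x, hxt, c, hc, hca⟩ := mem_iUnion₂.1 (ht (mem_univ (Quotient.mk _ a)))
  obtain ⟨g, rfl⟩ : c ∈ MulAction.orbit G a := Quotient.exact hca
  exact ⟨x, hxt, g, (interior_subset hc : g • a ∈ ball x (V x))⟩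

theorem mem_uniformity_of_invariant_mem_nhdsSet_diagonal [Group G] [MulAction G X]
    [CompactSpace (Quotient (MulAction.orbitRel G X))]
    (hbasis : ∀ V ∈ uniformity X, ∃ W ∈ uniformity X, W ⊆ V ∧
      ∀ (g : G) (x y : X), (x, y) ∈ W → (g • x, g • y) ∈ W)
    {U : Set (X × X)} (hUinv : ∀ (g : G) (a b : X), (a, b) ∈ U → (g • a, g • b) ∈ U)
    (hU : U ∈ nhdsSet (diagonal X)) :
    U ∈ uniformity X := by
  have := uniformContinuousConstSMul_of_invariant_basis hbasis
  have hlocal x := exists_invariant_mem_uniformity_forall_mem_of_mem_nhds hbasis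
    (mem_nhdsSet_iff_forall.1 hU (x, x) rfl)
  choose W hW hWinv hWU using hlocal
  obtain ⟨t, ht⟩ := exists_finset_forall_exists_smul_mem_of_compactSpace_quotient (G := G) W hW
  refine mem_of_superset ((biInter_finset_mem t).2 fun x _ => hW x) ?_
  rintro ⟨a, b⟩ hab
  obtain ⟨x, hxt, g, hxa⟩ := ht a
  have hgab : (g • a, g • b) ∈ U := hWU x _ _ hxa (hWinv x g a b (mem_iInter₂.1 hab x hxt))
  simpa using hUinv g⁻¹ _ _ hgab

end InvariantEntourages

/-- **Uniform continuity of equivariant maps** (the uniform continuity part of Lemma 11.2 of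
Bunke–Engel–Land): let `X` and `Y` be uniform spaces with actions of a group `G` whose
uniformities admit bases of `G`-invariant entourages, and assume the orbit space `X/G` with
the quotient topology is compact. Then every continuous `G`-equivariant map `f : X → Y` is
uniformly continuous. -/
theorem equivariant_continuous_map_is_uniformlyContinuous
    {G : Type*} [Group G] {X Y : Type*} [UniformSpace X] [UniformSpace Y]
    [MulAction G X] [MulAction G Y]
    -- the uniformities have invariant entourage bases
    (hXbasis : ∀ V ∈ uniformity X, ∃ W ∈ uniformity X, W ⊆ V ∧
      ∀ (g : G) (x y : X), (x, y) ∈ W → (g • x, g • y) ∈ W)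
    (hYbasis : ∀ V ∈ uniformity Y, ∃ W ∈ uniformity Y, W ⊆ V ∧
      ∀ (g : G) (x y : Y), (x, y) ∈ W → (g • x, g • y) ∈ W)
    -- the orbit space `X/G` is compact
    (hcompact : CompactSpace (Quotient (MulAction.orbitRel G X)))
    (f : X → Y) (hfc : Continuous f)
    (hfe : ∀ (g : G) (x : X), f (g • x) = g • f x) :
    UniformContinuous f := by
  intro V hV
  obtain ⟨W, hW, hWV, hWinv⟩ := hYbasis V hV
  have hdiag : Tendsto (Prod.map f f) (nhdsSet (diagonal X)) (uniformity Y) :=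
    ((hfc.prodMap hfc).tendsto_nhdsSet fun p (hp : p.1 = p.2) => congrArg f hp).mono_right
      nhdsSet_diagonal_le_uniformity
  have hpre : Prod.map f f ⁻¹' W ∈ uniformity X :=
    mem_uniformity_of_invariant_mem_nhdsSet_diagonal hXbasis
      (fun g a b hab => by simpa [hfe] using hWinv g (f a) (f b) hab) (hdiag hW)
  exact mem_of_superset hpre fun p hp => hWV hp
end
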